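/- arXiv:1903.10109 — 5 statements merged into one kernel-verified Lean document; each statement's English description precedes it below -/
import Mathlib

section
/- Let Σ be an n×n real symmetric positive definite matrix, let P be an a×n real matrix with full row rank, and let N be a b×n real matrix with full row rank such that every row of N lies in the row space of P (equivalently, N = F·P for some b×a matrix F of full row rank). Then for every z ∈ R^n: zᵀNᵀ(NΣNᵀ)⁻¹Nz ≤ zᵀPᵀ(PΣPᵀ)⁻¹Pz, and moreover rank(N) ≤ rank(P). -/
open Matrix

/-- A full-row-rank real matrix has linearly independent rows. -/
lemma rows_linearIndependent_of_rank {m n : ℕ} (B : Matrix (Fin m) (Fin n) ℝ)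
    (hB : B.rank = m) : LinearIndependent ℝ (fun i ↦ B i) := by
  rw [linearIndependent_iff_card_eq_finrank_span]
  rw [B.rank_eq_finrank_span_row] at hB
  have := hB.symm; simp [Set.finrank, Matrix.row] at this ⊢; exact this

/-- Conjugating a positive definite matrix by a full-row-rank matrix preserves
positive definiteness. -/
lemma posDef_conj {m n : ℕ} {A : Matrix (Fin n) (Fin n) ℝ} (hA : A.PosDef)
    (B : Matrix (Fin m) (Fin n) ℝ) (hB : B.rank = m) : (B * A * Bᵀ).PosDef := by
  have hinj : Function.Injective B.vecMul :=
    Matrix.vecMul_injective_iff.mpr (rows_linearIndependent_of_rank B hB)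
  have hsemi : (B * A * Bᵀ).PosSemidef := by
    have := hA.posSemidef.mul_mul_conjTranspose_same B
    simpa [Matrix.conjTranspose_eq_transpose_of_trivial] using this
  refine Matrix.PosDef.of_dotProduct_mulVec_pos hsemi.isHermitian (fun x hx ↦ ?_)
  have hBx : x ᵥ* B ≠ 0 := by
    intro h
    exact hx (hinj (by simpa using h))
  have h0 : Bᵀ *ᵥ x ≠ 0 := by rw [Matrix.mulVec_transpose]; exact hBx
  have e1 : (B * A * Bᵀ) *ᵥ x = B *ᵥ (A *ᵥ (Bᵀ *ᵥ x)) := by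
    simp [Matrix.mulVec_mulVec, Matrix.mul_assoc]
  have e2 : x ⬝ᵥ B *ᵥ (A *ᵥ (Bᵀ *ᵥ x)) = (Bᵀ *ᵥ x) ⬝ᵥ (A *ᵥ (Bᵀ *ᵥ x)) := by
    rw [Matrix.dotProduct_mulVec, ← Matrix.mulVec_transpose]
  have hlt := hA.dotProduct_mulVec_pos h0
  simp only [star_trivial] at hlt ⊢
  rw [e1, e2]
  exact hlt

/-- Step 3 of the proof of Lemma 3 of the paper. If `Σ` is positive
definite, `P` and `N` have full row rank, and every row of `N` lies in the row space of
`P` (i.e. `N = F ⬝ P` with `F` of full row rank), then for every `z`,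
`zᵀNᵀ(NΣNᵀ)⁻¹Nz ≤ zᵀPᵀ(PΣPᵀ)⁻¹Pz`, and `rank N ≤ rank P`. -/
theorem annihilator_quadratic_form_le
    {n a b : ℕ} (S : Matrix (Fin n) (Fin n) ℝ) (hS : S.PosDef)
    (P : Matrix (Fin a) (Fin n) ℝ) (hP : P.rank = a)
    (N : Matrix (Fin b) (Fin n) ℝ) (hN : N.rank = b)
    (F : Matrix (Fin b) (Fin a) ℝ) (hF : F.rank = b) (hNF : N = F * P) :
    (∀ z : Fin n → ℝ,
        z ⬝ᵥ (Nᵀ * (N * S * Nᵀ)⁻¹ * N).mulVec z ≤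
          z ⬝ᵥ (Pᵀ * (P * S * Pᵀ)⁻¹ * P).mulVec z) ∧
      N.rank ≤ P.rank := by
  constructor
  · set A : Matrix (Fin a) (Fin a) ℝ := P * S * Pᵀ with hAdef
    have hA : A.PosDef := posDef_conj hS P hP
    set M : Matrix (Fin b) (Fin b) ℝ := F * A * Fᵀ with hMdef
    have hM : M.PosDef := posDef_conj hA F hF
    have hAinv : A⁻¹.PosDef := hA.inv
    have hAu : IsUnit A.det := isUnit_iff_ne_zero.mpr hA.det_pos.ne'
    have hMu : IsUnit M.det := isUnit_iff_ne_zero.mpr hM.det_pos.ne'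
    have hA1 : A * A⁻¹ = 1 := Matrix.mul_nonsing_inv A hAu
    have hA1' : A⁻¹ * A = 1 := Matrix.nonsing_inv_mul A hAu
    have hM1 : M⁻¹ * M = 1 := Matrix.nonsing_inv_mul M hMu
    -- symmetry facts
    have hAsymm : Aᵀ = A := hA.isHermitian
    have hMsymm : Mᵀ = M := hM.isHermitian
    have hMinvsymm : (M⁻¹)ᵀ = M⁻¹ := by
      rw [Matrix.transpose_nonsing_inv, hMsymm]
    -- rewrite N * S * Nᵀ as M
    have hNSN : N * S * Nᵀ = M := by
      rw [hNF, hMdef, hAdef]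
      simp [Matrix.transpose_mul, Matrix.mul_assoc]
    -- abbreviations
    set Y : Matrix (Fin a) (Fin a) ℝ := Fᵀ * M⁻¹ * F with hYdef
    have hNMN : Nᵀ * (N * S * Nᵀ)⁻¹ * N = Pᵀ * Y * P := by
      rw [hNSN, hNF, hYdef]
      simp [Matrix.transpose_mul, Matrix.mul_assoc]
    set X : Matrix (Fin a) (Fin a) ℝ := A * Fᵀ * M⁻¹ * F with hXdef
    set K : Matrix (Fin a) (Fin n) ℝ := (1 - X) * P with hKdef
    have hXT : Xᵀ = Y * A := by
      rw [hXdef, hYdef]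
      simp [Matrix.transpose_mul, hMinvsymm, hAsymm, Matrix.mul_assoc]
    have hAinvX : A⁻¹ * X = Y := by
      rw [hXdef, hYdef]
      simp only [← Matrix.mul_assoc]
      rw [Matrix.nonsing_inv_mul A hAu, Matrix.one_mul]
    have hXTAinv : Xᵀ * A⁻¹ = Y := by
      rw [hXT, Matrix.mul_assoc, hA1, Matrix.mul_one]
    have hYX : Y * X = Y := by
      rw [hYdef, hXdef]
      calc Fᵀ * M⁻¹ * F * (A * Fᵀ * M⁻¹ * F)
          = Fᵀ * (M⁻¹ * (F * A * Fᵀ)) * (M⁻¹ * F) := by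
            simp only [Matrix.mul_assoc]
        _ = Fᵀ * M⁻¹ * F := by
            rw [← hMdef, hM1]; simp [Matrix.mul_assoc]
    have key : Kᵀ * A⁻¹ * K = Pᵀ * A⁻¹ * P - Pᵀ * Y * P := by
      have expand : Kᵀ * A⁻¹ * K
          = Pᵀ * (A⁻¹ - Xᵀ * A⁻¹ - A⁻¹ * X + Xᵀ * A⁻¹ * X) * P := by
        rw [hKdef]
        simp only [Matrix.transpose_mul, Matrix.transpose_sub, Matrix.transpose_one,
          Matrix.sub_mul, Matrix.mul_sub, Matrix.one_mul, Matrix.mul_one, Matrix.add_mul,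
          Matrix.mul_add, Matrix.mul_assoc]
        noncomm_ring
      rw [expand, hXTAinv, hAinvX, hYX]
      have h2 : A⁻¹ - Y - Y + Y = A⁻¹ - Y := by abel
      rw [h2, Matrix.mul_sub, Matrix.sub_mul]
    intro z
    have hpos : 0 ≤ (K *ᵥ z) ⬝ᵥ (A⁻¹ *ᵥ (K *ᵥ z)) := by
      have := hAinv.posSemidef.dotProduct_mulVec_nonneg (K *ᵥ z)
      simpa using this
    have hquad : z ⬝ᵥ (Kᵀ * A⁻¹ * K) *ᵥ z = (K *ᵥ z) ⬝ᵥ (A⁻¹ *ᵥ (K *ᵥ z)) := by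
      have e1 : (Kᵀ * A⁻¹ * K) *ᵥ z = Kᵀ *ᵥ (A⁻¹ *ᵥ (K *ᵥ z)) := by
        simp [Matrix.mulVec_mulVec, Matrix.mul_assoc]
      rw [e1, Matrix.dotProduct_mulVec, Matrix.vecMul_transpose]
    rw [hNMN]
    have : 0 ≤ z ⬝ᵥ (Pᵀ * A⁻¹ * P - Pᵀ * Y * P) *ᵥ z := by
      rw [← key, hquad]; exact hpos
    rw [Matrix.sub_mulVec, dotProduct_sub] at this
    linarith
  · rw [hNF]
    exact Matrix.rank_mul_le_right F P
end

section
/- Consider the linear recursion x(k+1) = A x(k) on R^{n₁+n₂} with A = [[A₁₁, B₁],[B̃₁, Ã₁₁]] (A₁₁ of size n₁×n₁), x(k) = (x₁(k), u₁(k)), and an r₁×n₁ matrix C₁ with C_{c,1} = [C₁, 0]. Fix a horizon T ≥ 1 and define the centralized observability matrix O_{c,1} = [ (C_{c,1}A)ᵀ, …, (C_{c,1}A^T)ᵀ ]ᵀ, the local observability matrix O₁ = [ (C₁A₁₁)ᵀ, …, (C₁A₁₁^T)ᵀ ]ᵀ, and the interconnection response matrix F₁^{(u)} whose (k,j) block (1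 ≤ j ≤ k ≤ T) equals C₁A₁₁^{k-1-j}B₁ (in the lower block-triangular Toeplitz arrangement with diagonal blocks C₁B₁). Then every vector z satisfying zᵀ[O₁, F₁^{(u)}] = 0 also satisfies zᵀO_{c,1} = 0; i.e., the left null space of [O₁, F₁^{(u)}] is contained in the left null space of O_{c,1}. -/
/-!
With `P = [I, 0]` and `Q = [0, I]` the block form of `A` gives `P A = A₁₁ P + B₁ Q`, hence the
discrete variation-of-constants formula `P A^(k+1) = A₁₁^(k+1) P + ∑_{j ≤ k} A₁₁^(k-j) B₁ Q A^j`.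
Since `C_{c,1} = C₁ P`, multiplying by `z_kᵀ C₁` and summing over `k` splits `zᵀ O_{c,1}` into
`(zᵀ O₁) P` and, after exchanging the two sums, `∑_j (zᵀ F₁^{(u)})_j Q A^j`; both vanish.
-/

open Matrix Finset

theorem Matrix.mul_pow_succ_eq_of_mul_eq_add {R l m n : Type*} [Semiring R]
    [Fintype l] [DecidableEq l] [Fintype m] [Fintype n] [DecidableEq n]
    {P : Matrix l n R} {Q : Matrix m n R} {M : Matrix n n R} {A : Matrix l l R}
    {B : Matrix l m R} (h : P * M = A * P + B * Q) (k : ℕ) :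
    P * M ^ (k + 1) = A ^ (k + 1) * P + ∑ j ∈ range (k + 1), A ^ (k - j) * B * (Q * M ^ j) := by
  induction k with
  | zero => simpa using h
  | succ k ih =>
    rw [pow_succ M, ← Matrix.mul_assoc, ih, Matrix.add_mul, Matrix.sum_mul, Matrix.mul_assoc,
      h, Matrix.mul_add, ← Matrix.mul_assoc, ← pow_succ, sum_range_succ' _ (k + 1)]
    simp only [Matrix.mul_assoc, ← pow_succ, Nat.add_sub_add_right, Nat.sub_zero, pow_zero,
      Matrix.mul_one]
    abel

theorem Matrix.fromCols_one_zero_mul_fromBlocks {R m n : Type*} [Semiring R]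
    [Fintype m] [DecidableEq m] [Fintype n] [DecidableEq n]
    (A : Matrix m m R) (B : Matrix m n R) (C : Matrix n m R) (D : Matrix n n R) :
    (fromCols 1 0 : Matrix m (m ⊕ n) R) * fromBlocks A B C D =
      A * (fromCols 1 0 : Matrix m (m ⊕ n) R) + B * (fromCols 0 1 : Matrix n (m ⊕ n) R) := by
  rw [fromCols_mul_fromBlocks, mul_fromCols, mul_fromCols]
  ext i (j | j) <;> simp

theorem Fin.sum_ite_le_eq_sum_range {M : Type*} [AddCommMonoid M] {T : ℕ} (k : Fin T)
    (f : ℕ → M) : ∑ j : Fin T, (if j ≤ k then f j else 0) = ∑ j ∈ range (k + 1), f j := by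
  rw [← sum_filter, Nat.range_succ_eq_Iic, ← Fin.map_valEmbedding_Iic, sum_map]
  congr 1
  ext j
  simp

/-- `z = (z₁, …, z_T)` is a block vector: `hO` and `hF` are the block columns of
`zᵀ [O₁, F₁^{(u)}] = 0`, and the conclusion is `zᵀ O_{c,1} = 0`. -/
theorem left_null_space_containment
    {n₁ n₂ r₁ T : ℕ}
    (A₁₁ : Matrix (Fin n₁) (Fin n₁) ℝ) (B₁ : Matrix (Fin n₁) (Fin n₂) ℝ)
    (Bt₁ : Matrix (Fin n₂) (Fin n₁) ℝ) (At₁₁ : Matrix (Fin n₂) (Fin n₂) ℝ)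
    (C₁ : Matrix (Fin r₁) (Fin n₁) ℝ)
    (A : Matrix (Fin n₁ ⊕ Fin n₂) (Fin n₁ ⊕ Fin n₂) ℝ)
    (hA : A = Matrix.fromBlocks A₁₁ B₁ Bt₁ At₁₁)
    (z : Fin T → Fin r₁ → ℝ)
    (hO : ∑ k : Fin T, Matrix.vecMul (z k) (C₁ * A₁₁ ^ (k.val + 1)) = 0)
    (hF : ∀ j : Fin T,
      ∑ k : Fin T, (if j ≤ k then
        Matrix.vecMul (z k) (C₁ * A₁₁ ^ (k.val - j.val) * B₁) else 0) = 0) :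
    ∑ k : Fin T,
      Matrix.vecMul (z k)
        (Matrix.fromCols C₁ (0 : Matrix (Fin r₁) (Fin n₂) ℝ) * A ^ (k.val + 1)) = 0 := by
  set P : Matrix (Fin n₁) (Fin n₁ ⊕ Fin n₂) ℝ := fromCols 1 0
  set Q : Matrix (Fin n₂) (Fin n₁ ⊕ Fin n₂) ℝ := fromCols 0 1
  have hPA : P * A = A₁₁ * P + B₁ * Q := hA ▸ fromCols_one_zero_mul_fromBlocks A₁₁ B₁ Bt₁ At₁₁
  have hC : fromCols C₁ (0 : Matrix (Fin r₁) (Fin n₂) ℝ) = C₁ * P := by simp [P, mul_fromCols]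
  have hterm (k : Fin T) : vecMul (z k) (C₁ * P * A ^ (k.val + 1)) =
      vecMul (vecMul (z k) (C₁ * A₁₁ ^ (k.val + 1))) P + ∑ j : Fin T,
        vecMul (if j ≤ k then vecMul (z k) (C₁ * A₁₁ ^ (k.val - j.val) * B₁) else 0)
          (Q * A ^ j.val) := by
    rw [vecMul_vecMul, Matrix.mul_assoc, mul_pow_succ_eq_of_mul_eq_add hPA, Matrix.mul_add,
      vecMul_add, ← Matrix.mul_assoc, ← vecMul_vecMul, Matrix.mul_sum, vecMul_sum,
      ← Fin.sum_ite_le_eq_sum_range]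
    congr 1
    refine sum_congr rfl fun j _ => ?_
    split_ifs <;> simp [vecMul_vecMul, Matrix.mul_assoc]
  calc _ = vecMul (∑ k : Fin T, vecMul (z k) (C₁ * A₁₁ ^ (k.val + 1))) P + ∑ j : Fin T,
        vecMul (∑ k : Fin T, if j ≤ k then vecMul (z k) (C₁ * A₁₁ ^ (k.val - j.val) * B₁) else 0)
          (Q * A ^ j.val) := by
        simp_rw [hC, hterm, sum_add_distrib, sum_vecMul]
        rw [sum_comm]
    _ = 0 := by simp [hO, hF]
end

section
/- Let Σ be a q×q real symmetric positive definite matrix and z ∈ R^q. Let Ñ be a b×q real matrix with full row rank and let N̂ be an a×q real matrix with full row rank such that every row of Ñ lies in the row space of N̂. Define p₁ = rank(ÑΣÑᵀ), p_c = rank(N̂ΣN̂ᵀ), λ₁ = zᵀÑᵀ(ÑΣÑᵀ)⁻¹Ñz, and λ_c = zᵀN̂ᵀ(N̂ΣN̂ᵀ)⁻¹N̂z. Then p₁ ≤ p_c and λ₁ ≤ λ_c. -/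
open Matrix

theorem mulVec_transpose_ne_zero {m q : ℕ} (U : Matrix (Fin m) (Fin q) ℝ) (hU : U.rank = m)
    (x : Fin m → ℝ) (hx : x ≠ 0) : Uᵀ *ᵥ x ≠ 0 := by
  have hr : Uᵀ.rank = m := by rw [rank_transpose]; exact hU
  have hker : LinearMap.ker Uᵀ.mulVecLin = ⊥ := by
    have h1 := LinearMap.finrank_range_add_finrank_ker Uᵀ.mulVecLin
    rw [show Module.finrank ℝ (Fin m → ℝ) = m by simp] at h1
    have h2 : Matrix.rank Uᵀ = Module.finrank ℝ (LinearMap.range Uᵀ.mulVecLin) := rfl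
    rw [← h2, hr] at h1
    have h3 : Module.finrank ℝ (LinearMap.ker Uᵀ.mulVecLin) = 0 := by omega
    exact Submodule.finrank_eq_zero.mp h3
  intro h
  have : x ∈ LinearMap.ker Uᵀ.mulVecLin := LinearMap.mem_ker.mpr (by rw [mulVecLin_apply]; exact h)
  rw [hker] at this
  exact hx (by simpa using this)

theorem posDef_mul_mul_transpose {m q : ℕ} (U : Matrix (Fin m) (Fin q) ℝ) (hU : U.rank = m) :
    (U * Uᵀ).PosDef := by
  rw [posDef_iff_dotProduct_mulVec]
  constructor
  · have := isHermitian_mul_conjTranspose_self U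
    simpa [conjTranspose_eq_transpose_of_trivial] using this
  · intro x hx
    have key : star x ⬝ᵥ (U * Uᵀ) *ᵥ x = (Uᵀ *ᵥ x) ⬝ᵥ (Uᵀ *ᵥ x) := by
      rw [← mulVec_mulVec, dotProduct_mulVec, mulVec_transpose]
      simp [star_trivial]
    rw [key]
    have hne := mulVec_transpose_ne_zero U hU x hx
    have := dotProduct_star_self_pos_iff (v := Uᵀ *ᵥ x)
    simpa [star_trivial] using this.mpr hne

/-- Orthogonal projection onto the row space of `U`. -/
noncomputable def proj {m q : ℕ} (U : Matrix (Fin m) (Fin q) ℝ) : Matrix (Fin q) (Fin q) ℝ :=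
  Uᵀ * (U * Uᵀ)⁻¹ * U

theorem gram_transpose {m q : ℕ} (U : Matrix (Fin m) (Fin q) ℝ) : (U * Uᵀ)ᵀ = U * Uᵀ := by
  rw [transpose_mul, transpose_transpose]

theorem proj_transpose {m q : ℕ} (U : Matrix (Fin m) (Fin q) ℝ) : (proj U)ᵀ = proj U := by
  unfold proj
  rw [transpose_mul, transpose_mul, transpose_transpose, transpose_nonsing_inv,
    gram_transpose, Matrix.mul_assoc]

theorem proj_absorb {m₁ m₂ q : ℕ} (U₁ : Matrix (Fin m₁) (Fin q) ℝ)
    (U₂ : Matrix (Fin m₂) (Fin q) ℝ) (F : Matrix (Fin m₁) (Fin m₂) ℝ) (hF : U₁ = F * U₂)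
    (h₂ : IsUnit (U₂ * U₂ᵀ).det) :
    proj U₂ * proj U₁ = proj U₁ := by
  have key : (U₂ * U₂ᵀ)⁻¹ * (U₂ * U₁ᵀ) = Fᵀ := by
    rw [hF, transpose_mul, ← Matrix.mul_assoc U₂, ← Matrix.mul_assoc,
      nonsing_inv_mul _ h₂, Matrix.one_mul]
  calc proj U₂ * proj U₁
      = U₂ᵀ * ((U₂ * U₂ᵀ)⁻¹ * (U₂ * U₁ᵀ)) * ((U₁ * U₁ᵀ)⁻¹ * U₁) := by
        unfold proj; simp only [Matrix.mul_assoc]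
    _ = U₂ᵀ * Fᵀ * ((U₁ * U₁ᵀ)⁻¹ * U₁) := by rw [key]
    _ = U₁ᵀ * ((U₁ * U₁ᵀ)⁻¹ * U₁) := by rw [← transpose_mul, ← hF]
    _ = proj U₁ := by unfold proj; rw [Matrix.mul_assoc]

theorem proj_quad_mono {q m₁ m₂ : ℕ} (U₁ : Matrix (Fin m₁) (Fin q) ℝ)
    (U₂ : Matrix (Fin m₂) (Fin q) ℝ) (F : Matrix (Fin m₁) (Fin m₂) ℝ) (hF : U₁ = F * U₂)
    (h₁ : IsUnit (U₁ * U₁ᵀ).det) (h₂ : IsUnit (U₂ * U₂ᵀ).det) (w : Fin q → ℝ) :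
    w ⬝ᵥ proj U₁ *ᵥ w ≤ w ⬝ᵥ proj U₂ *ᵥ w := by
  set D := proj U₂ - proj U₁ with hDdef
  have hP21 : proj U₂ * proj U₁ = proj U₁ := proj_absorb U₁ U₂ F hF h₂
  have hP11 : proj U₁ * proj U₁ = proj U₁ :=
    proj_absorb U₁ U₁ 1 (by rw [Matrix.one_mul]) h₁
  have hP22 : proj U₂ * proj U₂ = proj U₂ :=
    proj_absorb U₂ U₂ 1 (by rw [Matrix.one_mul]) h₂
  have hP12 : proj U₁ * proj U₂ = proj U₁ := by
    have := congrArg transpose hP21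
    rwa [transpose_mul, proj_transpose U₁, proj_transpose U₂] at this
  have hDsym : Dᵀ = D := by rw [hDdef, transpose_sub, proj_transpose, proj_transpose]
  have hDD : D * D = D := by
    rw [hDdef, Matrix.sub_mul, Matrix.mul_sub, Matrix.mul_sub, hP22, hP21, hP12, hP11]
    abel
  have hvm : w ᵥ* D = D *ᵥ w := by
    conv_rhs => rw [← hDsym]
    exact (mulVec_transpose D w).symm
  have hquad : w ⬝ᵥ D *ᵥ w = (D *ᵥ w) ⬝ᵥ (D *ᵥ w) := by
    conv_lhs => rw [← hDD, ← mulVec_mulVec, dotProduct_mulVec, hvm]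
  have hnonneg : 0 ≤ w ⬝ᵥ D *ᵥ w := by
    rw [hquad]
    exact Finset.sum_nonneg fun i _ => mul_self_nonneg _
  have hsplit : w ⬝ᵥ D *ᵥ w = w ⬝ᵥ proj U₂ *ᵥ w - w ⬝ᵥ proj U₁ *ᵥ w := by
    rw [hDdef, sub_mulVec, dotProduct_sub]
  linarith [hsplit ▸ hnonneg]

theorem quad_subst {q : ℕ} (M R : Matrix (Fin q) (Fin q) ℝ) (w : Fin q → ℝ) :
    (R *ᵥ w) ⬝ᵥ (M *ᵥ (R *ᵥ w)) = w ⬝ᵥ ((Rᵀ * M * R) *ᵥ w) := by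
  rw [← mulVec_mulVec, ← mulVec_mulVec, dotProduct_mulVec w, vecMul_transpose]

/-- Lemma 3 of the paper: degrees of freedom and noncentrality
parameters. Let `Σ` be positive definite, `Ñ` and `N̂` of full row rank with every row
of `Ñ` in the row space of `N̂` (i.e. `Ñ = F ⬝ N̂`). Then the degrees of freedom and the
noncentrality parameter of the local detector are no larger than those of the
centralized detector: `rank (Ñ Σ Ñᵀ) ≤ rank (N̂ Σ N̂ᵀ)` and
`zᵀÑᵀ(ÑΣÑᵀ)⁻¹Ñz ≤ zᵀN̂ᵀ(N̂ΣN̂ᵀ)⁻¹N̂z`. -/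
theorem dof_and_noncentrality_le
    {q a b : ℕ} (S : Matrix (Fin q) (Fin q) ℝ) (hS : S.PosDef) (z : Fin q → ℝ)
    (Nt : Matrix (Fin b) (Fin q) ℝ) (hNt : Nt.rank = b)
    (Nh : Matrix (Fin a) (Fin q) ℝ) (hNh : Nh.rank = a)
    (F : Matrix (Fin b) (Fin a) ℝ) (hNF : Nt = F * Nh)
    (p₁ pc lam₁ lamc : ℝ)
    (hp₁ : p₁ = (Nt * S * Ntᵀ).rank) (hpc : pc = (Nh * S * Nhᵀ).rank)
    (hlam₁ : lam₁ = z ⬝ᵥ (Ntᵀ * (Nt * S * Ntᵀ)⁻¹ * Nt).mulVec z)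
    (hlamc : lamc = z ⬝ᵥ (Nhᵀ * (Nh * S * Nhᵀ)⁻¹ * Nh).mulVec z) :
    p₁ ≤ pc ∧ lam₁ ≤ lamc := by
  -- a symmetric invertible square root of S
  obtain ⟨R, hRsym, hRR, hRdet⟩ :
      ∃ R : Matrix (Fin q) (Fin q) ℝ, Rᵀ = R ∧ R * R = S ∧ IsUnit R.det := by
    open scoped MatrixOrder in
    refine ⟨CFC.sqrt S, ?_, CFC.sqrt_mul_sqrt_self S hS.posSemidef.nonneg, ?_⟩
    · have := (Matrix.nonneg_iff_posSemidef.mp (CFC.sqrt_nonneg S)).1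
      rwa [IsHermitian, conjTranspose_eq_transpose_of_trivial] at this
    · have hSdet : IsUnit S.det := (isUnit_iff_isUnit_det S).mp hS.isUnit
      rw [← CFC.sqrt_mul_sqrt_self S hS.posSemidef.nonneg, det_mul] at hSdet
      exact isUnit_of_mul_isUnit_left hSdet
  have hU₁rank : (Nt * R).rank = b := by
    rw [rank_mul_eq_left_of_isUnit_det _ _ hRdet]; exact hNt
  have hU₂rank : (Nh * R).rank = a := by
    rw [rank_mul_eq_left_of_isUnit_det _ _ hRdet]; exact hNh
  have hU₁F : Nt * R = F * (Nh * R) := by rw [hNF, Matrix.mul_assoc]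
  have hG₁ : (Nt * R) * (Nt * R)ᵀ = Nt * S * Ntᵀ := by
    rw [transpose_mul, hRsym, ← hRR]; simp only [Matrix.mul_assoc]
  have hG₂ : (Nh * R) * (Nh * R)ᵀ = Nh * S * Nhᵀ := by
    rw [transpose_mul, hRsym, ← hRR]; simp only [Matrix.mul_assoc]
  have hG₁pd : ((Nt * R) * (Nt * R)ᵀ).PosDef := posDef_mul_mul_transpose _ hU₁rank
  have hG₂pd : ((Nh * R) * (Nh * R)ᵀ).PosDef := posDef_mul_mul_transpose _ hU₂rank
  have hG₁det : IsUnit ((Nt * R) * (Nt * R)ᵀ).det := (isUnit_iff_isUnit_det _).mp hG₁pd.isUnit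
  have hG₂det : IsUnit ((Nh * R) * (Nh * R)ᵀ).det := (isUnit_iff_isUnit_det _).mp hG₂pd.isUnit
  constructor
  · -- ranks
    have hrank₁ : (Nt * S * Ntᵀ).rank = b := by
      rw [← hG₁, rank_of_isUnit _ ((isUnit_iff_isUnit_det _).mpr hG₁det)]; simp
    have hrank₂ : (Nh * S * Nhᵀ).rank = a := by
      rw [← hG₂, rank_of_isUnit _ ((isUnit_iff_isUnit_det _).mpr hG₂det)]; simp
    have hba : b ≤ a := by
      have h1 : Nt.rank ≤ F.rank := hNF ▸ rank_mul_le_left F Nh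
      have h2 : F.rank ≤ a := by simpa using rank_le_card_width F
      omega
    rw [hp₁, hpc, hrank₁, hrank₂]; exact_mod_cast hba
  · -- noncentrality parameters
    obtain ⟨w, hzw⟩ : ∃ w, z = R *ᵥ w :=
      ⟨R⁻¹ *ᵥ z, by rw [mulVec_mulVec, mul_nonsing_inv _ hRdet, one_mulVec]⟩
    have hM₁ : Rᵀ * (Ntᵀ * (Nt * S * Ntᵀ)⁻¹ * Nt) * R = proj (Nt * R) := by
      unfold proj
      rw [hG₁, transpose_mul, hRsym]
      simp only [Matrix.mul_assoc]
    have hM₂ : Rᵀ * (Nhᵀ * (Nh * S * Nhᵀ)⁻¹ * Nh) * R = proj (Nh * R) := by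
      unfold proj
      rw [hG₂, transpose_mul, hRsym]
      simp only [Matrix.mul_assoc]
    rw [hlam₁, hlamc, hzw, quad_subst, quad_subst, hM₁, hM₂]
    exact proj_quad_mono (Nt * R) (Nh * R) F hU₁F hG₁det hG₂det w
end

section
/- Let Λ_c be a noncentral chi-squared random variable with p_c degrees of freedom and noncentrality parameter λ_c (i.e., Λ_c = ∑_{i=1}^{p_c}(Z_i+μ_i)² with Z_i i.i.d. standard Gaussian and ‖μ‖² = λ_c). Let N ≥ 1, let P^D_1,…,P^D_N ∈ [0,1) with P^D_max = max_i P^D_i, and let τ_c ≥ 0 satisfy τ_c ≤ p_c + λ_c − √(4N(p_c + 2λ_c)·ln(1/(1 − P^D_max))). Then Pr[Λ_c ≥ τ_c] ≥ 1 − ∏_{i=1}^N (1 − P^D_i); that is, the centralized detection probability P^D_c = Q(τ_c; p_c, λ_c) is at least the decentralized detection probability P^D_d = 1 − ∏_{i=1}^N (1 − P^D_i). -/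
/-!
The centralized statistic `Λ = ∑ (Zᵢ + μᵢ)²` has moment generating function
`E[exp(-uΛ)] = (1 + 2u)^(-p/2) exp(-uλ / (1 + 2u))`, obtained by completing the square
against the Gaussian density. Using `log (1 + 2u) ≥ 2u - 2u²` and `1 / (1 + 2u) ≥ 1 - 2u`
this is at most `exp(-u(p + λ) + u²(p + 2λ))`, and the Chernoff bound with the optimal `u`
gives the Laurent–Massart lower tail `Pr[Λ < p + λ - √(4(p + 2λ)x)] ≤ e^{-x}`. For
`x = N log (1 / (1 - P_max))` we have `e^{-x} = (1 - P_max)^N ≤ ∏ (1 - Pᵢ)`, the miss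
probability of the decentralized detector.
-/

open MeasureTheory ProbabilityTheory Real

lemma Real.two_mul_sub_two_mul_sq_le_log_one_add_two_mul {u : ℝ} (hu : 0 ≤ u) :
    2 * u - 2 * u ^ 2 ≤ log (1 + 2 * u) := by
  refine le_trans ?_ (le_log_one_add_of_nonneg (by positivity : 0 ≤ 2 * u))
  rw [le_div_iff₀ (by positivity)]
  nlinarith [pow_nonneg hu 3]

lemma Real.inv_sqrt_one_add_two_mul_le_exp {u : ℝ} (hu : 0 ≤ u) :
    (√(1 + 2 * u))⁻¹ ≤ exp (-u + u ^ 2) := by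
  have h : 0 < 1 + 2 * u := by positivity
  rw [sqrt_eq_rpow, ← rpow_neg h.le, rpow_def_of_pos h, exp_le_exp]
  linarith [two_mul_sub_two_mul_sq_le_log_one_add_two_mul hu]

lemma Real.neg_mul_div_one_add_two_mul_le {u a : ℝ} (hu : 0 ≤ u) (ha : 0 ≤ a) :
    -u * a / (1 + 2 * u) ≤ -u * a + 2 * u ^ 2 * a := by
  rw [div_le_iff₀ (by positivity)]
  nlinarith [mul_nonneg (mul_nonneg (pow_nonneg hu 3) ha) zero_le_four]

/-- Completing the square in the exponent. -/
lemma gaussianPDFReal_mul_exp_mul_add_sq {t : ℝ} (ht : t < 1 / 2) (c x : ℝ) :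
    gaussianPDFReal 0 1 x * exp (t * (x + c) ^ 2) =
      (√(1 - 2 * t))⁻¹ * exp (t * c ^ 2 / (1 - 2 * t)) *
        gaussianPDFReal (2 * t * c / (1 - 2 * t)) (1 - 2 * t).toNNReal⁻¹ x := by
  have ha : 0 < 1 - 2 * t := by linarith
  have hexp : -x ^ 2 / 2 + t * (x + c) ^ 2 =
      t * c ^ 2 / (1 - 2 * t) + -(x - 2 * t * c / (1 - 2 * t)) ^ 2 / (2 * (1 - 2 * t)⁻¹) := by
    field_simp
    ring
  have hsqrt : √(2 * π * (1 - 2 * t)⁻¹) = √(2 * π) * (√(1 - 2 * t))⁻¹ := by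
    rw [sqrt_mul (by positivity), sqrt_inv]
  have hpos : 0 < √(1 - 2 * t) := sqrt_pos.2 ha
  simp only [gaussianPDFReal, NNReal.coe_inv, Real.coe_toNNReal _ ha.le, NNReal.coe_one,
    mul_one, sub_zero]
  rw [mul_assoc, ← exp_add, hexp, exp_add, hsqrt]
  field_simp

lemma integral_exp_mul_add_sq_gaussianReal {t : ℝ} (ht : t < 1 / 2) (c : ℝ) :
    ∫ x, exp (t * (x + c) ^ 2) ∂gaussianReal 0 1 =
      (√(1 - 2 * t))⁻¹ * exp (t * c ^ 2 / (1 - 2 * t)) := by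
  simp_rw [integral_gaussianReal_eq_integral_smul one_ne_zero, smul_eq_mul,
    gaussianPDFReal_mul_exp_mul_add_sq ht, integral_const_mul]
  rw [integral_gaussianPDFReal_eq_one _ (by simp; linarith), mul_one]

namespace ProbabilityTheory

variable {Ω ι : Type*} [MeasurableSpace Ω] {P : Measure Ω}

lemma mgf_add_sq_of_map_eq_gaussianReal {X : Ω → ℝ} (hX : AEMeasurable X P)
    (hlaw : P.map X = gaussianReal 0 1) (c : ℝ) {t : ℝ} (ht : t < 1 / 2) :
    mgf (fun ω ↦ (X ω + c) ^ 2) P t =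
      (√(1 - 2 * t))⁻¹ * exp (t * c ^ 2 / (1 - 2 * t)) := by
  rw [← integral_exp_mul_add_sq_gaussianReal ht, ← hlaw]
  exact (mgf_map (X := fun x ↦ (x + c) ^ 2) hX (by fun_prop)).symm

variable [Fintype ι] {Z : ι → Ω → ℝ}

lemma iIndepFun.mgf_sum_add_sq (hmeas : ∀ i, Measurable (Z i)) (hindep : iIndepFun Z P)
    (hlaw : ∀ i, P.map (Z i) = gaussianReal 0 1) (μ : ι → ℝ) {t : ℝ} (ht : t < 1 / 2) :
    mgf (fun ω ↦ ∑ i, (Z i ω + μ i) ^ 2) P t =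
      (√(1 - 2 * t))⁻¹ ^ Fintype.card ι * exp (t * (∑ i, μ i ^ 2) / (1 - 2 * t)) := by
  have hsum : (fun ω ↦ ∑ i, (Z i ω + μ i) ^ 2) = ∑ i, fun ω ↦ (Z i ω + μ i) ^ 2 := by
    ext ω
    simp
  have hindep' : iIndepFun (fun i ω ↦ (Z i ω + μ i) ^ 2) P :=
    hindep.comp (fun i x ↦ (x + μ i) ^ 2) (fun i ↦ by fun_prop)
  rw [hsum, hindep'.mgf_sum (fun i ↦ by fun_prop)]
  simp_rw [mgf_add_sq_of_map_eq_gaussianReal (hmeas _).aemeasurable (hlaw _) _ ht]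
  rw [Finset.prod_mul_distrib, ← exp_sum, Finset.prod_const, Finset.card_univ,
    Finset.mul_sum, Finset.sum_div]

lemma iIndepFun.mgf_sum_add_sq_neg_le (hmeas : ∀ i, Measurable (Z i)) (hindep : iIndepFun Z P)
    (hlaw : ∀ i, P.map (Z i) = gaussianReal 0 1) (μ : ι → ℝ) {u : ℝ} (hu : 0 ≤ u) :
    mgf (fun ω ↦ ∑ i, (Z i ω + μ i) ^ 2) P (-u) ≤
      exp (-u * (Fintype.card ι + ∑ i, μ i ^ 2) +
        u ^ 2 * (Fintype.card ι + 2 * ∑ i, μ i ^ 2)) := by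
  rw [hindep.mgf_sum_add_sq hmeas hlaw μ (by linarith), show 1 - 2 * -u = 1 + 2 * u by ring]
  calc _ ≤ exp (-u + u ^ 2) ^ Fintype.card ι *
          exp (-u * (∑ i, μ i ^ 2) + 2 * u ^ 2 * ∑ i, μ i ^ 2) := by
        gcongr
        · exact inv_sqrt_one_add_two_mul_le_exp hu
        · exact neg_mul_div_one_add_two_mul_le hu (by positivity)
    _ = _ := by
        rw [← exp_nat_mul, ← exp_add]
        ring_nf

/-- Chernoff bound at `-u` with `u = √(x / S)`, `S = n + 2 ∑ μᵢ²`, which turns the exponent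
`-u (τ - n - ∑ μᵢ²) + u² S` into at most `-2x + x`. -/
lemma iIndepFun.measureReal_sum_add_sq_lt_le_exp_neg (hmeas : ∀ i, Measurable (Z i))
    (hindep : iIndepFun Z P) (hlaw : ∀ i, P.map (Z i) = gaussianReal 0 1) (μ : ι → ℝ)
    {τ x : ℝ} (hx : 0 ≤ x)
    (hτ : τ ≤ Fintype.card ι + ∑ i, μ i ^ 2 -
      √(4 * (Fintype.card ι + 2 * ∑ i, μ i ^ 2) * x)) :
    P.real {ω | ∑ i, (Z i ω + μ i) ^ 2 < τ} ≤ exp (-x) := by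
  have := hindep.isProbabilityMeasure
  set Λ : Ω → ℝ := fun ω ↦ ∑ i, (Z i ω + μ i) ^ 2
  set S : ℝ := Fintype.card ι + 2 * ∑ i, μ i ^ 2
  have hμ : 0 ≤ ∑ i, μ i ^ 2 := by positivity
  rcases le_or_gt τ 0 with hτ0 | hτ0
  · have hempty : {ω | Λ ω < τ} = ∅ :=
      Set.eq_empty_of_forall_notMem fun ω hω ↦ hω.not_ge (hτ0.trans (by positivity))
    rw [hempty, measureReal_empty]
    positivity
  have hS : 0 < S := by linarith [sqrt_nonneg (4 * S * x)]
  set u := √(x / S)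
  have hu : 0 ≤ u := sqrt_nonneg _
  have hu_sq : u ^ 2 * S = x := by
    rw [sq_sqrt (by positivity)]
    field_simp
  have hu_sqrt : u * √(4 * S * x) = 2 * x := by
    rw [← sqrt_mul (by positivity), show x / S * (4 * S * x) = (2 * x) ^ 2 by field_simp; ring,
      sqrt_sq (by positivity)]
  have hint : Integrable (fun ω ↦ exp (-u * Λ ω)) P := by
    refine mgf_pos_iff.1 ?_
    rw [hindep.mgf_sum_add_sq hmeas hlaw μ (by linarith), show 1 - 2 * -u = 1 + 2 * u by ring]
    positivity
  calc P.real {ω | Λ ω < τ} ≤ P.real {ω | Λ ω ≤ τ} :=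
        measureReal_mono fun ω (hω : Λ ω < τ) ↦ hω.le
    _ ≤ exp (-(-u) * τ) * mgf Λ P (-u) := measure_le_le_exp_mul_mgf τ (neg_nonpos.2 hu) hint
    _ ≤ exp (u * τ) * exp (-u * (Fintype.card ι + ∑ i, μ i ^ 2) + u ^ 2 * S) := by
        rw [neg_neg]
        gcongr
        exact hindep.mgf_sum_add_sq_neg_le hmeas hlaw μ hu
    _ ≤ exp (-x) := by
        rw [← exp_add, exp_le_exp]
        nlinarith [mul_le_mul_of_nonneg_left hτ hu]

end ProbabilityTheory

theorem centralized_outperforms_decentralized_general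
    {Ω : Type*} [MeasurableSpace Ω] (P : Measure Ω) [IsProbabilityMeasure P]
    {pc : ℕ} (Z : Fin pc → Ω → ℝ) (hZmeas : ∀ i, Measurable (Z i))
    (hZindep : iIndepFun Z P)
    (hZ : ∀ i, P.map (Z i) = gaussianReal 0 1)
    (μ : Fin pc → ℝ) (lamc : ℝ) (hlamc : lamc = ∑ i, (μ i) ^ 2)
    {N : ℕ} (PD : Fin N → ℝ)
    (hPD : ∀ i, 0 ≤ PD i ∧ PD i < 1)
    (PDmax : ℝ) (hPDmax : IsGreatest (Set.range PD) PDmax)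
    (τc : ℝ)
    (hτc : τc ≤ pc + lamc -
      Real.sqrt (4 * N * (pc + 2 * lamc) * Real.log (1 / (1 - PDmax)))) :
    1 - ∏ i, (1 - PD i) ≤ (P {ω | τc ≤ ∑ i, (Z i ω + μ i) ^ 2}).toReal := by
  obtain ⟨⟨j, rfl⟩, hmax⟩ := hPDmax
  subst hlamc
  have hpos : 0 < 1 - PD j := sub_pos.2 (hPD j).2
  have hx : 0 ≤ N * log (1 / (1 - PD j)) :=
    mul_nonneg N.cast_nonneg (log_nonneg (one_le_one_div hpos (by linarith [(hPD j).1])))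
  have htail := hZindep.measureReal_sum_add_sq_lt_le_exp_neg hZmeas hZ μ hx
    (by simpa only [Fintype.card_fin, mul_assoc, mul_left_comm _ (N : ℝ)] using hτc)
  have hexp : exp (-(N * log (1 / (1 - PD j)))) = (1 - PD j) ^ N := by
    rw [one_div, log_inv, mul_neg, neg_neg, exp_nat_mul, exp_log hpos]
  have hprod : (1 - PD j) ^ N ≤ ∏ i, (1 - PD i) := by
    rw [← Fin.prod_const]
    exact Finset.prod_le_prod (fun _ _ ↦ hpos.le)
      fun i _ ↦ sub_le_sub_left (hmax ⟨i, rfl⟩) 1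
  have hcompl :
      {ω | τc ≤ ∑ i, (Z i ω + μ i) ^ 2} = {ω | ∑ i, (Z i ω + μ i) ^ 2 < τc}ᶜ := by
    ext
    simp
  rw [← measureReal_def, hcompl,
    probReal_compl_eq_one_sub (measurableSet_lt (by fun_prop) measurable_const)]
  linarith

/-- Theorem 1 of the paper: sufficient condition for `P^D_c ≥ P^D_d`.
Let `Λ_c` be noncentral chi-squared with `p_c` degrees of freedom and noncentrality
`λ_c` (realized as `∑ (Z i + μ i)²` with `Z i` i.i.d. standard Gaussians, `λ_c = ‖μ‖²`).
If `0 ≤ τ_c ≤ p_c + λ_c − √(4 N (p_c + 2 λ_c) ln(1/(1 − P^D_max)))`, then the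
centralized detection probability `Pr[Λ_c ≥ τ_c]` is at least the decentralized one,
`1 − ∏ i (1 − P^D i)`. -/
theorem centralized_outperforms_decentralized
    {Ω : Type*} [MeasurableSpace Ω] (P : Measure Ω) [IsProbabilityMeasure P]
    {pc : ℕ} (Z : Fin pc → Ω → ℝ) (hZmeas : ∀ i, Measurable (Z i))
    (hZindep : iIndepFun Z P)
    (hZ : ∀ i, P.map (Z i) = gaussianReal 0 1)
    (μ : Fin pc → ℝ) (lamc : ℝ) (hlamc : lamc = ∑ i, (μ i) ^ 2)
    {N : ℕ} (hN : 1 ≤ N) (PD : Fin N → ℝ)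
    (hPD : ∀ i, 0 ≤ PD i ∧ PD i < 1)
    (PDmax : ℝ) (hPDmax : IsGreatest (Set.range PD) PDmax)
    (τc : ℝ) (hτc0 : 0 ≤ τc)
    (hτc : τc ≤ pc + lamc -
      Real.sqrt (4 * N * (pc + 2 * lamc) * Real.log (1 / (1 - PDmax)))) :
    1 - ∏ i, (1 - PD i) ≤ (P {ω | τc ≤ ∑ i, (Z i ω + μ i) ^ 2}).toReal :=
  centralized_outperforms_decentralized_general P Z hZmeas hZindep hZ μ lamc hlamc PD hPD PDmax
    hPDmax τc hτc
end

section
/- Let Λ_c be a noncentral chi-squared random variable with p_c degrees of freedom and noncentrality parameter λ_c (i.e., Λ_c = ∑_{i=1}^{p_c}(Z_i+μ_i)² with Z_i i.i.d. standard Gaussian and ‖μ‖² = λ_c). Let N ≥ 1, let P^D_1,…,P^D_N ∈ (0,1] with P^D_min = min_i P^D_i > 0, and let τ_c satisfy τ_c ≥ p_c + λ_c + √(4(p_c + 2λ_c)·ln(1/(1 − (1 − P^D_min)^N))) + 2·ln(1/(1 − (1 − P^D_min)^N)). Then 1 − ∏_{i=1}^N (1 − P^D_i) ≥ Pr[Λ_c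 ≥ τ_c]; that is, the decentralized detection probability P^D_d = 1 − ∏_{i=1}^N (1 − P^D_i) is at least the centralized detection probability P^D_c = Q(τ_c; p_c, λ_c). -/
/-!
Since `1 - ∏ (1 - P^D_i) ≥ 1 - (1 - P^D_min)^N = e^{-x}` with `x = ln (1 / (1 - (1 - P^D_min)^N))`,
it suffices to bound the chi-squared tail by `e^{-x}` at the threshold
`p + λ + 2 √((p + 2λ) x) + 2x` (Laurent–Massart). The mgf of `(Z + c)²` is
`(1 - 2t)^{-1/2} exp (t c² / (1 - 2t))`, and `-log u ≤ (u⁻¹ - u) / 2` turns the mgf of the sum into the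
sub-gamma bound `exp (t (p + λ) + (p + 2λ) t² / (1 - 2t))`; the Chernoff bound at
`t = √x / (√(p + 2λ) + 2 √x)` then gives exactly `e^{-x}`.
-/

open MeasureTheory ProbabilityTheory Real

lemma neg_log_le_inv_sub_div_two {u : ℝ} (hu : 0 < u) (hu1 : u ≤ 1) :
    -log u ≤ (u⁻¹ - u) / 2 := by
  have h := self_le_sinh_iff.mpr (neg_nonneg.mpr (log_nonpos hu.le hu1))
  rwa [← log_inv, sinh_log (inv_pos.mpr hu), inv_inv, log_inv] at h

lemma gaussianPDFReal_mul_exp_mul_sq_add {t : ℝ} (c x : ℝ) (ht : t < 1 / 2) :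
    gaussianPDFReal 0 1 x * exp (t * (x + c) ^ 2) =
      (√(2 * π))⁻¹ * exp (t * c ^ 2 / (1 - 2 * t)) *
        exp (-(1 / 2 - t) * (x - t * c / (1 / 2 - t)) ^ 2) := by
  have : 1 / 2 - t ≠ 0 := by linarith
  have : 1 - 2 * t ≠ 0 := by linarith
  simp only [gaussianPDFReal, NNReal.coe_one, mul_one, sub_zero, mul_assoc, ← exp_add]
  congr 2
  field_simp
  ring

lemma integrable_exp_mul_sq_add_gaussianReal {t : ℝ} (c : ℝ) (ht : t < 1 / 2) :
    Integrable (fun x ↦ exp (t * (x + c) ^ 2)) (gaussianReal 0 1) := by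
  rw [gaussianReal_of_var_ne_zero 0 one_ne_zero, integrable_withDensity_iff_integrable_smul'
    (measurable_gaussianPDF 0 1) (ae_of_all _ fun _ ↦ gaussianPDF_lt_top)]
  simp_rw [toReal_gaussianPDF, smul_eq_mul, gaussianPDFReal_mul_exp_mul_sq_add c _ ht]
  exact ((integrable_exp_neg_mul_sq (by linarith)).comp_sub_right _).const_mul _

lemma integral_exp_mul_sq_add_gaussianReal {t : ℝ} (c : ℝ) (ht : t < 1 / 2) :
    ∫ x, exp (t * (x + c) ^ 2) ∂gaussianReal 0 1 =
      (√(1 - 2 * t))⁻¹ * exp (t * c ^ 2 / (1 - 2 * t)) := by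
  simp_rw [integral_gaussianReal_eq_integral_smul one_ne_zero, smul_eq_mul,
    gaussianPDFReal_mul_exp_mul_sq_add c _ ht, integral_const_mul,
    integral_sub_right_eq_self (fun x ↦ exp (-(1 / 2 - t) * x ^ 2)), integral_gaussian]
  have hπ : π / (1 / 2 - t) = 2 * π / (1 - 2 * t) := by
    field_simp
  rw [hπ, sqrt_div (by positivity)]
  have : 0 < √(2 * π) := by positivity
  field_simp

theorem measureReal_ge_le_exp_neg_of_mgf_le {Ω : Type*} [MeasurableSpace Ω] {P : Measure Ω}
    [IsFiniteMeasure P] {X : Ω → ℝ} {m a x : ℝ} (ha : 0 < a) (hx : 0 ≤ x)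
    (hint : ∀ t, 0 ≤ t → t < 1 / 2 → Integrable (fun ω ↦ exp (t * X ω)) P)
    (hmgf : ∀ t, 0 ≤ t → t < 1 / 2 → mgf X P t ≤ exp (t * m + a * t ^ 2 / (1 - 2 * t))) :
    P.real {ω | m + √(4 * a * x) + 2 * x ≤ X ω} ≤ exp (-x) := by
  set s := √a
  set r := √x
  set t := r / (s + 2 * r)
  have hs : 0 < s := sqrt_pos.mpr ha
  have hr : 0 ≤ r := sqrt_nonneg x
  have ht₀ : 0 ≤ t := by positivity
  have ht : t < 1 / 2 := by
    rw [div_lt_iff₀ (by positivity)]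
    linarith
  have hsqrt : √(4 * a * x) = 2 * s * r := by
    rw [sqrt_mul (by positivity), sqrt_mul (by norm_num), show (4 : ℝ) = 2 ^ 2 by norm_num,
      sqrt_sq (by norm_num)]
  have hexponent : -t * (2 * s * r + 2 * r ^ 2) + s ^ 2 * t ^ 2 / (1 - 2 * t) = -r ^ 2 := by
    have : 1 - 2 * t = s / (s + 2 * r) := by
      simp only [t]
      field_simp
      ring
    rw [this]
    simp only [t]
    field_simp
    ring
  calc _ ≤ exp (-t * (m + √(4 * a * x) + 2 * x)) * mgf X P t :=
        measure_ge_le_exp_mul_mgf _ ht₀ (hint t ht₀ ht)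
    _ ≤ exp (-t * (m + √(4 * a * x) + 2 * x)) * exp (t * m + a * t ^ 2 / (1 - 2 * t)) := by
        gcongr
        exact hmgf t ht₀ ht
    _ = exp (-x) := by
        rw [← exp_add, hsqrt]
        congr 1
        linear_combination hexponent - (t ^ 2 / (1 - 2 * t)) * sq_sqrt ha.le +
          (2 * t - 1) * sq_sqrt hx

section NoncentralChiSquared

variable {Ω ι : Type*} [MeasurableSpace Ω] {P : Measure Ω} {t : ℝ}

lemma integrable_exp_mul_sq_add_of_map_eq_gaussianReal {Z : Ω → ℝ} (hZm : Measurable Z)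
    (hZ : P.map Z = gaussianReal 0 1) (c : ℝ) (ht : t < 1 / 2) :
    Integrable (fun ω ↦ exp (t * (Z ω + c) ^ 2)) P :=
  (integrable_map_measure (g := fun x ↦ exp (t * (x + c) ^ 2)) (by fun_prop)
    hZm.aemeasurable).mp (hZ ▸ integrable_exp_mul_sq_add_gaussianReal c ht)

lemma mgf_sq_add_of_map_eq_gaussianReal {Z : Ω → ℝ} (hZm : Measurable Z)
    (hZ : P.map Z = gaussianReal 0 1) (c : ℝ) (ht : t < 1 / 2) :
    mgf (fun ω ↦ (Z ω + c) ^ 2) P t = (√(1 - 2 * t))⁻¹ * exp (t * c ^ 2 / (1 - 2 * t)) := by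
  rw [← integral_exp_mul_sq_add_gaussianReal c ht, ← hZ,
    integral_map hZm.aemeasurable (by fun_prop)]
  rfl

variable [Fintype ι] {Z : ι → Ω → ℝ}

lemma mgf_sum_sq_add (hZm : ∀ i, Measurable (Z i)) (hindep : iIndepFun Z P)
    (hZ : ∀ i, P.map (Z i) = gaussianReal 0 1) (μ : ι → ℝ) (ht : t < 1 / 2) :
    mgf (fun ω ↦ ∑ i, (Z i ω + μ i) ^ 2) P t =
      (√(1 - 2 * t))⁻¹ ^ Fintype.card ι * exp (t * (∑ i, μ i ^ 2) / (1 - 2 * t)) := by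
  have := (hindep.comp (fun i x ↦ (x + μ i) ^ 2) (fun i ↦ by fun_prop)).mgf_sum
    (fun i ↦ by fun_prop) (t := t) Finset.univ
  simp only [Finset.sum_fn, Function.comp_def] at this
  rw [this, Finset.prod_congr rfl fun i _ ↦
      mgf_sq_add_of_map_eq_gaussianReal (hZm i) (hZ i) (μ i) ht,
    Finset.prod_mul_distrib, Finset.prod_const, Finset.card_univ, ← exp_sum, Finset.mul_sum,
    Finset.sum_div]

lemma mgf_sum_sq_add_le (hZm : ∀ i, Measurable (Z i)) (hindep : iIndepFun Z P)
    (hZ : ∀ i, P.map (Z i) = gaussianReal 0 1) (μ : ι → ℝ) (ht₀ : 0 ≤ t) (ht : t < 1 / 2) :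
    mgf (fun ω ↦ ∑ i, (Z i ω + μ i) ^ 2) P t ≤
      exp (t * (Fintype.card ι + ∑ i, μ i ^ 2) +
        (Fintype.card ι + 2 * ∑ i, μ i ^ 2) * t ^ 2 / (1 - 2 * t)) := by
  set p : ℝ := (Fintype.card ι : ℝ)
  set lam := ∑ i, μ i ^ 2
  have hu : 0 < 1 - 2 * t := by linarith
  have hsqrt : (√(1 - 2 * t))⁻¹ ^ Fintype.card ι = exp (p * -(log (1 - 2 * t) / 2)) := by
    rw [← exp_log (by positivity : 0 < (√(1 - 2 * t))⁻¹ ^ Fintype.card ι), log_pow, log_inv,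
      log_sqrt hu.le]
  have hlog : p * -(log (1 - 2 * t) / 2) ≤ p * (((1 - 2 * t)⁻¹ - (1 - 2 * t)) / 4) :=
    mul_le_mul_of_nonneg_left (by linarith [neg_log_le_inv_sub_div_two hu (by linarith)])
      (Nat.cast_nonneg _)
  rw [mgf_sum_sq_add hZm hindep hZ μ ht, hsqrt, ← exp_add, exp_le_exp]
  calc _ ≤ p * (((1 - 2 * t)⁻¹ - (1 - 2 * t)) / 4) + t * lam / (1 - 2 * t) := by linarith
    _ = _ := by field_simp; ring

variable [IsProbabilityMeasure P]

lemma integrable_exp_mul_sum_sq_add (hZm : ∀ i, Measurable (Z i)) (hindep : iIndepFun Z P)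
    (hZ : ∀ i, P.map (Z i) = gaussianReal 0 1) (μ : ι → ℝ) (ht : t < 1 / 2) :
    Integrable (fun ω ↦ exp (t * ∑ i, (Z i ω + μ i) ^ 2)) P := by
  have := (hindep.comp (fun i x ↦ (x + μ i) ^ 2) (fun i ↦ by fun_prop)).integrable_exp_mul_sum
    (fun i ↦ by fun_prop) (s := Finset.univ)
    (fun i _ ↦ integrable_exp_mul_sq_add_of_map_eq_gaussianReal (hZm i) (hZ i) (μ i) ht)
  simpa only [Finset.sum_apply, Function.comp_apply] using this

theorem measureReal_sum_sq_add_ge_le_exp_neg (hZm : ∀ i, Measurable (Z i))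
    (hindep : iIndepFun Z P) (hZ : ∀ i, P.map (Z i) = gaussianReal 0 1) (μ : ι → ℝ) {x : ℝ}
    (hx : 0 ≤ x) :
    P.real {ω | Fintype.card ι + ∑ i, μ i ^ 2 +
        √(4 * (Fintype.card ι + 2 * ∑ i, μ i ^ 2) * x) + 2 * x ≤ ∑ i, (Z i ω + μ i) ^ 2} ≤
      exp (-x) := by
  rcases (show (0 : ℝ) ≤ Fintype.card ι + 2 * ∑ i, μ i ^ 2 by positivity).eq_or_lt with ha | ha
  · have hlam : 0 ≤ ∑ i, μ i ^ 2 := by positivity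
    have : IsEmpty ι := Fintype.card_eq_zero_iff.mp
      (Nat.cast_eq_zero.mp (show (Fintype.card ι : ℝ) = 0 by linarith))
    rcases hx.eq_or_lt with rfl | hx
    · simp
    · simp [not_le.mpr (by positivity : 0 < 2 * x), exp_nonneg]
  exact measureReal_ge_le_exp_neg_of_mgf_le ha hx
    (fun t _ ht ↦ integrable_exp_mul_sum_sq_add hZm hindep hZ μ ht)
    (fun t ht₀ ht ↦ mgf_sum_sq_add_le hZm hindep hZ μ ht₀ ht)

end NoncentralChiSquared

theorem prod_one_sub_le_one_sub_pow {ι : Type*} [Fintype ι] {a : ι → ℝ} {m : ℝ}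
    (hm : ∀ i, m ≤ a i) (ha : ∀ i, a i ≤ 1) :
    ∏ i, (1 - a i) ≤ (1 - m) ^ Fintype.card ι := by
  rw [← Finset.card_univ, ← Finset.prod_const]
  exact Finset.prod_le_prod (fun i _ ↦ sub_nonneg.mpr (ha i)) fun i _ ↦ sub_le_sub_left (hm i) 1

/-- Theorem 2 of the paper: sufficient condition for `P^D_d ≥ P^D_c`.
Let `Λ_c` be noncentral chi-squared with `p_c` degrees of freedom and noncentrality
`λ_c` (realized as `∑ (Z i + μ i)²` with `Z i` i.i.d. standard Gaussians, `λ_c = ‖μ‖²`).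
If `τ_c ≥ p_c + λ_c + √(4 (p_c + 2 λ_c) ln(1/(1 − (1 − P^D_min)^N)))
+ 2 ln(1/(1 − (1 − P^D_min)^N))`, then the decentralized detection probability
`1 − ∏ i (1 − P^D i)` is at least the centralized one, `Pr[Λ_c ≥ τ_c]`. -/
theorem decentralized_outperforms_centralized
    {Ω : Type*} [MeasurableSpace Ω] (P : Measure Ω) [IsProbabilityMeasure P]
    {pc : ℕ} (Z : Fin pc → Ω → ℝ) (hZmeas : ∀ i, Measurable (Z i))
    (hZindep : iIndepFun Z P)
    (hZ : ∀ i, P.map (Z i) = gaussianReal 0 1)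
    (μ : Fin pc → ℝ) (lamc : ℝ) (hlamc : lamc = ∑ i, (μ i) ^ 2)
    {N : ℕ} (hN : 1 ≤ N) (PD : Fin N → ℝ)
    (hPD : ∀ i, 0 < PD i ∧ PD i ≤ 1)
    (PDmin : ℝ) (hPDmin : IsLeast (Set.range PD) PDmin)
    (τc : ℝ)
    (hτc : pc + lamc +
        Real.sqrt (4 * (pc + 2 * lamc) * Real.log (1 / (1 - (1 - PDmin) ^ N))) +
        2 * Real.log (1 / (1 - (1 - PDmin) ^ N)) ≤ τc) :
    (P {ω | τc ≤ ∑ i, (Z i ω + μ i) ^ 2}).toReal ≤ 1 - ∏ i, (1 - PD i) := by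
  obtain ⟨⟨i₀, rfl⟩, hmin⟩ := hPDmin
  subst hlamc
  set q := (1 - PD i₀) ^ N
  have hq₀ : 0 ≤ q := pow_nonneg (sub_nonneg.mpr (hPD i₀).2) N
  have hq : q < 1 :=
    pow_lt_one₀ (sub_nonneg.mpr (hPD i₀).2) (by linarith [(hPD i₀).1]) (by omega)
  have hprod : ∏ i, (1 - PD i) ≤ q := by
    simpa using
      prod_one_sub_le_one_sub_pow (fun i ↦ hmin (Set.mem_range_self i)) fun i ↦ (hPD i).2
  have hx : 0 ≤ log (1 / (1 - q)) := log_nonneg (by rw [le_div_iff₀ (by linarith)]; linarith)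
  calc (P {ω | τc ≤ ∑ i, (Z i ω + μ i) ^ 2}).toReal
      ≤ P.real {ω | pc + ∑ i, μ i ^ 2 + √(4 * (pc + 2 * ∑ i, μ i ^ 2) * log (1 / (1 - q))) +
          2 * log (1 / (1 - q)) ≤ ∑ i, (Z i ω + μ i) ^ 2} :=
        measureReal_mono fun ω hω ↦ hτc.trans hω
    _ ≤ exp (-log (1 / (1 - q))) := by
        simpa only [Fintype.card_fin] using
          measureReal_sum_sq_add_ge_le_exp_neg hZmeas hZindep hZ μ hx
    _ = 1 - q := by rw [one_div, log_inv, neg_neg, exp_log (by linarith)]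
    _ ≤ 1 - ∏ i, (1 - PD i) := by linarith
end
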